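/- Let f : {0,1}^n → C be a symmetric classifier, i.e., f(x ∘ σ) = f(x) for every x ∈ {0,1}^n and every permutation σ of the coordinates {1,…,n}, and let D be the uniform distribution on {0,1}^n. Then the global sufficient value function depends only on the cardinality of its argument: for all S₁, S₂ ⊆ {1,…,n} with |S₁| = |S₂|, v^g_suff(S₁) = v^g_suff(S₂). -/
import Mathlib


open Finset

open Classical in
/-- Conditional probability `Pr(A | B) = Pr(A ∩ B) / Pr(B)` over a finite space,
with mass function `P`. -/
noncomputable def condPr {F : Type*} [Fintype F] (P : F → ℝ) (A B : F → Prop) : ℝ :=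
  (∑ z, if A z ∧ B z then P z else 0) / (∑ z, if B z then P z else 0)

open Classical in
/-- The global sufficient value function on `{0,1}^n`:
`v^g_suff(S) = Σ_{x : P x > 0} P x · Pr_{z∼D}(f z = f x | z_S = x_S)`. -/
noncomputable def vgSuff {n : ℕ} {C : Type*} (f : (Fin n → Bool) → C)
    (P : (Fin n → Bool) → ℝ) (S : Finset (Fin n)) : ℝ :=
  ∑ x ∈ Finset.univ.filter (fun x => 0 < P x),
    P x * condPr P (fun z => f z = f x) (fun z => ∀ i ∈ S, z i = x i)

open Classical in
/-- if `f : {0,1}^n → C` is symmetric (invariant under every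
permutation of the coordinates) and `D` is the uniform distribution on
`{0,1}^n`, then `v^g_suff(S)` depends only on `|S|`. -/
theorem vgSuff_symmetric_depends_only_on_card {n : ℕ}
    {C : Type*} [Fintype C] [Nonempty C]
    (f : (Fin n → Bool) → C)
    (hsymm : ∀ (x : Fin n → Bool) (σ : Equiv.Perm (Fin n)), f (x ∘ σ) = f x)
    (P : (Fin n → Bool) → ℝ) (hP : ∀ x, P x = 1 / 2 ^ n)
    (S₁ S₂ : Finset (Fin n)) (hcard : S₁.card = S₂.card) :
    vgSuff f P S₁ = vgSuff f P S₂ := by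
  -- build a permutation σ with σ i ∈ S₁ ↔ i ∈ S₂
  have hc : Fintype.card {x // x ∈ S₂} = Fintype.card {x // x ∈ S₁} := by
    simp [Fintype.card_coe, hcard]
  let e : {x // x ∈ S₂} ≃ {x // x ∈ S₁} := Fintype.equivOfCardEq hc
  let σ : Equiv.Perm (Fin n) := e.extendSubtype
  have hσ : ∀ i, σ i ∈ S₁ ↔ i ∈ S₂ := by
    intro i
    constructor
    · intro h
      by_contra hi
      exact e.extendSubtype_not_mem i hi h
    · intro h
      exact e.extendSubtype_mem i h
  -- the reindexing equiv on functions: x ↦ x ∘ σ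
  let E : (Fin n → Bool) ≃ (Fin n → Bool) :=
    (Equiv.arrowCongr σ (Equiv.refl Bool)).symm
  have hE : ∀ x : Fin n → Bool, E x = x ∘ σ := fun x => rfl
  have hcond : ∀ x z : Fin n → Bool,
      ((∀ i ∈ S₂, (z ∘ σ) i = (x ∘ σ) i) ↔ (∀ i ∈ S₁, z i = x i)) := by
    intro x z
    constructor
    · intro h j hj
      have hi : σ.symm j ∈ S₂ := by
        rw [← hσ]; simpa using hj
      simpa using h (σ.symm j) hi
    · intro h i hi
      exact h (σ i) ((hσ i).mpr hi)
  have hfil : (Finset.univ.filter (fun x : Fin n → Bool => 0 < P x)) = Finset.univ := by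
    ext x; simp [hP]
  unfold vgSuff
  rw [hfil]
  refine Fintype.sum_equiv E _ _ ?_
  intro x
  rw [hE]
  congr 1
  · rw [hP, hP (x ∘ σ)]
  unfold condPr
  congr 1
  · refine Fintype.sum_equiv E _ _ ?_
    intro z
    simp only [hE]
    rw [hP z, hP (z ∘ σ)]
    have h1 : f (z ∘ σ) = f z := hsymm z σ
    have h2 : f (x ∘ σ) = f x := hsymm x σ
    simp only [h1, h2, hcond x z]
    exact ite_congr rfl (fun _ => rfl) (fun _ => rfl)
  · refine Fintype.sum_equiv E _ _ ?_
    intro z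
    simp only [hE]
    rw [hP z, hP (z ∘ σ)]
    simp only [hcond x z]
    exact ite_congr rfl (fun _ => rfl) (fun _ => rfl)
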